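/- (Dominance Rule) Let K = (k_0, k_1, …, k_N) and K' = (k'_0, k'_1, …, k'_N) be switching policies such that, for some J ∈ {0, 1, …, N−1}, one has k_0 = k'_0 = 0, k_1 = k'_1 = 1, …, k_{J−1} = k'_{J−1} = J−1, and k_J ≠ k'_J. If W_q(K') < W_q(K), then there exists an index i ∈ {J, J+1, …, N−1} for which k'_i < k_i. -/

import Mathlib

open Finset

/-- A switching policy: `k 0 ≥ 0`, `k i - k (i-1) ≥ 1` for `1 ≤ i ≤ N`, and `k N = S`. -/
def IsPolicy (N : ℕ) (S : ℤ) (k : ℕ → ℤ) : Prop :=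
  0 ≤ k 0 ∧ (∀ i : ℕ, 1 ≤ i → i ≤ N → 1 ≤ k i - k (i - 1)) ∧ k N = S

/-- `X_i = ∏_{g=1}^{i-1} (1/g)^(k_g - k_{g-1})`. -/
noncomputable def Xcoef (k : ℕ → ℤ) (i : ℕ) : ℝ :=
  ∏ g ∈ Finset.Icc 1 (i - 1), ((1 : ℝ) / (g : ℝ)) ^ (k g - k (g - 1))

/-- `β (k 0) = 1` and, for `1 ≤ i ≤ N` and `k (i-1) + 1 ≤ j ≤ k i`,
`β j = (λ/μ)^(j - k 0) * (1/i)^(j - k (i-1)) * X_i`. -/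
def IsBeta (lam mu : ℝ) (N : ℕ) (k : ℕ → ℤ) (β : ℤ → ℝ) : Prop :=
  β (k 0) = 1 ∧
  ∀ i : ℕ, 1 ≤ i → i ≤ N → ∀ j : ℤ, k (i - 1) + 1 ≤ j → j ≤ k i →
    β j = (lam / mu) ^ (j - k 0) * ((1 : ℝ) / (i : ℝ)) ^ (j - k (i - 1)) * Xcoef k i

/-- Steady-state probabilities `P j = β j / Σ_{m=k 0}^{S} β m`. -/
noncomputable def Pfun (S : ℤ) (k : ℕ → ℤ) (β : ℤ → ℝ) (j : ℤ) : ℝ :=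
  β j / ∑ m ∈ Finset.Icc (k 0) S, β m

/-- Expected number of front-room workers. -/
noncomputable def Fval (N : ℕ) (S : ℤ) (k : ℕ → ℤ) (β : ℤ → ℝ) : ℝ :=
  ∑ i ∈ Finset.Icc 1 N, ∑ j ∈ Finset.Icc (k (i - 1) + 1) (k i), (i : ℝ) * Pfun S k β j

/-- Expected number of back-room workers. -/
noncomputable def Bval (N : ℕ) (S : ℤ) (k : ℕ → ℤ) (β : ℤ → ℝ) : ℝ :=
  (N : ℝ) - Fval N S k β

/-- Expected number of customers in the front room. -/
noncomputable def Lval (S : ℤ) (k : ℕ → ℤ) (β : ℤ → ℝ) : ℝ :=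
  ∑ j ∈ Finset.Icc (k 0) S, (j : ℝ) * Pfun S k β j

/-- Expected waiting time `W_q = L / (λ (1 - P S)) - 1/μ`. -/
noncomputable def Wq (lam mu : ℝ) (S : ℤ) (k : ℕ → ℤ) (β : ℤ → ℝ) : ℝ :=
  Lval S k β / (lam * (1 - Pfun S k β S)) - 1 / mu

/-!
Contrapositive: if `K ≤ K'` pointwise, then `W_q(K) ≤ W_q(K')`. Both waiting times have the form
`(∑_{j ≤ S} j β_j) / (λ ∑_{j < S} β_j) - 1/μ`. The weights satisfy `β_{j+1} = β_j (λ/μ) / i`,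
where `i` is the stage containing `j + 1`; switching later means being in an earlier stage, so
`β' / β` is nondecreasing. A Chebyshev-type rearrangement inequality for such a pair of weights,
applied to `j ↦ j` and the indicator of `j < S`, compares the two quotients.
-/

theorem sum_mul_sum_le_sum_mul_sum_of_cross_le {ι : Type*} [LinearOrder ι] (s : Finset ι)
    (f h p q : ι → ℝ) (hfh : ∀ j ∈ s, ∀ m ∈ s, m ≤ j → f m * h j ≤ f j * h m)
    (hpq : ∀ j ∈ s, ∀ m ∈ s, m ≤ j → p j * q m ≤ q j * p m) :
    (∑ j ∈ s, f j * p j) * ∑ j ∈ s, h j * q j ≤ (∑ j ∈ s, f j * q j) * ∑ j ∈ s, h j * p j := by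
  have hterm : ∀ j ∈ s, ∀ m ∈ s, 0 ≤ (f j * h m - f m * h j) * (q j * p m - p j * q m) := by
    intro j hj m hm
    rcases le_total m j with hmj | hjm
    · exact mul_nonneg (sub_nonneg.2 (hfh j hj m hm hmj)) (sub_nonneg.2 (hpq j hj m hm hmj))
    · refine mul_nonneg_of_nonpos_of_nonpos (sub_nonpos.2 (hfh m hm j hj hjm)) (sub_nonpos.2 ?_)
      linarith [hpq m hm j hj hjm, mul_comm (p m) (q j), mul_comm (q m) (p j)]
  have hexpand :
      (∑ j ∈ s, f j * q j) * ∑ j ∈ s, h j * p j - (∑ j ∈ s, f j * p j) * ∑ j ∈ s, h j * q j =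
        ∑ j ∈ s, ∑ m ∈ s, f j * h m * (q j * p m - p j * q m) := by
    simp only [sum_mul_sum, ← sum_sub_distrib]
    exact sum_congr rfl fun _ _ => sum_congr rfl fun _ _ => by ring
  have hanti : ∑ j ∈ s, ∑ m ∈ s, f m * h j * (q j * p m - p j * q m)
      = -∑ j ∈ s, ∑ m ∈ s, f j * h m * (q j * p m - p j * q m) := by
    rw [sum_comm]
    simp only [← sum_neg_distrib]
    exact sum_congr rfl fun _ _ => sum_congr rfl fun _ _ => by ring
  have hsum := sum_nonneg fun j hj => sum_nonneg (hterm j hj)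
  simp only [sub_mul, sum_sub_distrib, hanti] at hsum
  linarith

namespace IsPolicy

variable {N : ℕ} {S : ℤ} {k k' : ℕ → ℤ}

theorem monotoneOn (hk : IsPolicy N S k) : MonotoneOn k (Set.Iic N) :=
  monotoneOn_of_le_succ Set.ordConnected_Iic fun i _ _ hi => by
    have := hk.2.1 (i + 1) (by omega) hi
    rw [Nat.add_sub_cancel] at this
    rw [Order.succ_eq_add_one]
    omega

theorem zero_lt (hk : IsPolicy N S k) (hN : 1 ≤ N) : k 0 < S :=
  calc k 0 ≤ k (N - 1) := hk.monotoneOn (by simp) (by simp) (Nat.zero_le _)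
    _ < k N := by have := hk.2.1 N hN le_rfl; omega
    _ = S := hk.2.2

theorem exists_stage (hk : IsPolicy N S k) {j : ℤ} (h0 : k 0 < j) (hS : j ≤ S) :
    ∃ i, 1 ≤ i ∧ i ≤ N ∧ k (i - 1) < j ∧ j ≤ k i := by
  have hex : ∃ i, j ≤ k i := ⟨N, hk.2.2 ▸ hS⟩
  have hspec : j ≤ k (Nat.find hex) := Nat.find_spec hex
  have hpos : Nat.find hex ≠ 0 := fun h => by rw [h] at hspec; omega
  have hmin : ¬ j ≤ k (Nat.find hex - 1) := Nat.find_min hex (by omega)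
  exact ⟨Nat.find hex, by omega, Nat.find_min' hex (hk.2.2 ▸ hS), by omega, hspec⟩

theorem stage_le_stage (hk' : IsPolicy N S k') {i i' : ℕ} {j : ℤ} (hi'N : i' ≤ N)
    (hki : k i ≤ k' i) (hj : j ≤ k i) (hj' : k' (i' - 1) < j) : i' ≤ i := by
  by_contra! h
  have := hk'.monotoneOn (by simp; omega) (by simp; omega) (show i ≤ i' - 1 by omega)
  omega

end IsPolicy

theorem Xcoef_succ (k : ℕ → ℤ) {i : ℕ} (hi : 1 ≤ i) :
    Xcoef k (i + 1) = Xcoef k i * (1 / (i : ℝ)) ^ (k i - k (i - 1)) := by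
  obtain ⟨i, rfl⟩ : ∃ i', i = i' + 1 := ⟨i - 1, by omega⟩
  simp only [Xcoef, Nat.add_sub_cancel]
  rw [prod_Icc_succ_top (by omega)]
  push_cast
  rfl

namespace IsBeta

variable {lam mu : ℝ} {N : ℕ} {S : ℤ} {k k' : ℕ → ℤ} {β β' : ℤ → ℝ}

theorem succ_eq (hk : IsPolicy N S k) (hβ : IsBeta lam mu N k β) (hr : lam / mu ≠ 0) {i : ℕ}
    {j : ℤ} (hi : 1 ≤ i) (hiN : i ≤ N) (hlo : k (i - 1) ≤ j) (hhi : j < k i) :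
    β (j + 1) = β j * (lam / mu) / i := by
  have hi0 : (1 / (i : ℝ)) ≠ 0 := one_div_ne_zero (by positivity)
  rw [hβ.2 i hi hiN (j + 1) (by omega) (by omega)]
  rcases hlo.lt_or_eq with hlt | rfl
  · rw [hβ.2 i hi hiN j (by omega) hhi.le, add_sub_right_comm, add_sub_right_comm _ 1 (k (i - 1)),
      zpow_add_one₀ hr, zpow_add_one₀ hi0]
    ring
  obtain ⟨i, rfl⟩ : ∃ i', i = i' + 1 := ⟨i - 1, by omega⟩
  rw [Nat.add_sub_cancel] at hlo hhi ⊢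
  rcases Nat.eq_zero_or_pos i with rfl | hi1
  · simp [hβ.1, Xcoef]
  · have hstep := hk.2.1 i hi1 (by omega)
    rw [hβ.2 i hi1 (by omega) (k i) (by omega) le_rfl, Xcoef_succ k hi1, add_sub_right_comm,
      zpow_add_one₀ hr, add_sub_cancel_left, zpow_one]
    push_cast
    ring

theorem exists_succ_eq (hk : IsPolicy N S k) (hβ : IsBeta lam mu N k β) (hr : lam / mu ≠ 0)
    {j : ℤ} (h0 : k 0 ≤ j) (hS : j < S) :
    ∃ i : ℕ, 1 ≤ i ∧ i ≤ N ∧ k (i - 1) ≤ j ∧ j < k i ∧ β (j + 1) = β j * (lam / mu) / i := by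
  obtain ⟨i, hi, hiN, hlo, hhi⟩ := hk.exists_stage (j := j + 1) (by omega) (by omega)
  exact ⟨i, hi, hiN, by omega, by omega, hβ.succ_eq hk hr hi hiN (by omega) (by omega)⟩

theorem pos (hk : IsPolicy N S k) (hβ : IsBeta lam mu N k β) (hr : 0 < lam / mu) {j : ℤ}
    (h0 : k 0 ≤ j) (hS : j ≤ S) : 0 < β j := by
  induction j, h0 using Int.leInduction with
  | base => simp [hβ.1]
  | succ j hj ih =>
    obtain ⟨i, hi, -, -, -, hstep⟩ := hβ.exists_succ_eq hk hr.ne' hj (by omega)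
    rw [hstep]
    exact div_pos (mul_pos (ih (by omega)) hr) (by exact_mod_cast hi)

theorem mul_le_mul_of_policy_le (hk : IsPolicy N S k) (hk' : IsPolicy N S k')
    (hβ : IsBeta lam mu N k β) (hβ' : IsBeta lam mu N k' β') (hr : 0 < lam / mu)
    (hle : ∀ t ≤ N, k t ≤ k' t) {m j : ℤ} (hm : k' 0 ≤ m) (hmj : m ≤ j) (hjS : j ≤ S) :
    β j * β' m ≤ β' j * β m := by
  have hk0 := hle 0 (Nat.zero_le N)
  induction j, hmj using Int.leInduction with
  | base => rw [mul_comm]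
  | succ j hj ih =>
    obtain ⟨i, hi, hiN, -, hhi, hstep⟩ :=
      hβ.exists_succ_eq hk hr.ne' (j := j) (by omega) (by omega)
    obtain ⟨i', hi', hi'N, hlo', -, hstep'⟩ :=
      hβ'.exists_succ_eq hk' hr.ne' (j := j) (by omega) (by omega)
    have hii : (i' : ℝ) ≤ i := by
      exact_mod_cast hk'.stage_le_stage hi'N (hle i hiN) (j := j + 1) (by omega) (by omega)
    have hi'0 : (0 : ℝ) < i' := by exact_mod_cast hi'
    have hcross := ih (by omega)
    have hβm := hβ.pos hk hr (by omega) (show m ≤ S by omega)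
    have hβ'j := hβ'.pos hk' hr (by omega) (show j ≤ S by omega)
    rw [hstep, hstep']
    calc β j * (lam / mu) / i * β' m = β j * β' m * (lam / mu) / i := by ring
      _ ≤ β' j * β m * (lam / mu) / i := by gcongr
      _ ≤ β' j * β m * (lam / mu) / i' := by gcongr
      _ = β' j * (lam / mu) / i' * β m := by ring

theorem sum_pos (hk : IsPolicy N S k) (hβ : IsBeta lam mu N k β) (hr : 0 < lam / mu)
    {s : Finset ℤ} (hs : s ⊆ Icc (k 0) S) (hne : s.Nonempty) : 0 < ∑ j ∈ s, β j :=
  Finset.sum_pos (fun _ hj => hβ.pos hk hr (mem_Icc.1 (hs hj)).1 (mem_Icc.1 (hs hj)).2) hne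

theorem sum_mul_sum_le_of_policy_le (hk : IsPolicy N S k) (hk' : IsPolicy N S k')
    (hβ : IsBeta lam mu N k β) (hβ' : IsBeta lam mu N k' β') (hr : 0 < lam / mu)
    (hle : ∀ t ≤ N, k t ≤ k' t) :
    (∑ j ∈ Icc (k 0) S, (j : ℝ) * β j) * ∑ j ∈ Ico (k' 0) S, β' j ≤
      (∑ j ∈ Icc (k' 0) S, (j : ℝ) * β' j) * ∑ j ∈ Ico (k 0) S, β j := by
  have hk0 : k 0 ≤ k' 0 := hle 0 (Nat.zero_le N)
  -- `β'` extended by zero to the support `Icc (k 0) S` of `β`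
  set q : ℤ → ℝ := fun j => if k' 0 ≤ j then β' j else 0
  set h : ℤ → ℝ := fun j => if j < S then 1 else 0
  have hfh : ∀ j ∈ Icc (k 0) S, ∀ m ∈ Icc (k 0) S, m ≤ j → (m : ℝ) * h j ≤ j * h m := by
    intro j hj m hm hmj
    simp only [mem_Icc] at hj hm
    have : (0 : ℝ) ≤ j := by exact_mod_cast hk.1.trans hj.1
    simp only [h]
    split_ifs <;> first | omega | simp [this, hmj]
  have hpq : ∀ j ∈ Icc (k 0) S, ∀ m ∈ Icc (k 0) S, m ≤ j → β j * q m ≤ q j * β m := by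
    intro j hj m hm hmj
    simp only [mem_Icc] at hj hm
    by_cases hm' : k' 0 ≤ m
    · simp only [q, if_pos hm', if_pos (hm'.trans hmj)]
      exact hβ.mul_le_mul_of_policy_le hk hk' hβ' hr hle hm' hmj hj.2
    · have hq : 0 ≤ q j := by
        simp only [q]
        split_ifs with hj'
        exacts [(hβ'.pos hk' hr hj' hj.2).le, le_rfl]
      simp only [q, if_neg hm', mul_zero]
      exact mul_nonneg hq (hβ.pos hk hr hm.1 hm.2).le
  have key := sum_mul_sum_le_sum_mul_sum_of_cross_le _ (fun j : ℤ => (j : ℝ)) h β q hfh hpq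
  have e1 : ∑ j ∈ Icc (k 0) S, (j : ℝ) * q j = ∑ j ∈ Icc (k' 0) S, (j : ℝ) * β' j := by
    simp only [q, mul_ite, mul_zero, ← sum_filter]
    congr 1; ext; simp; omega
  have e2 : ∑ j ∈ Icc (k 0) S, h j * q j = ∑ j ∈ Ico (k' 0) S, β' j := by
    simp only [h, q, ite_mul, one_mul, zero_mul, ← sum_filter, filter_filter]
    congr 1; ext; simp; omega
  have e3 : ∑ j ∈ Icc (k 0) S, h j * β j = ∑ j ∈ Ico (k 0) S, β j := by
    simp only [h, ite_mul, one_mul, zero_mul, ← sum_filter]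
    congr 1; ext; simp; omega
  rwa [e1, e2, e3] at key

end IsBeta

theorem Wq_eq_div (lam mu : ℝ) {S : ℤ} (k : ℕ → ℤ) {β : ℤ → ℝ} (hS : k 0 ≤ S)
    (hA : ∑ j ∈ Icc (k 0) S, β j ≠ 0) :
    Wq lam mu S k β =
      (∑ j ∈ Icc (k 0) S, (j : ℝ) * β j) / (lam * ∑ j ∈ Ico (k 0) S, β j) - 1 / mu := by
  have hP : 1 - Pfun S k β S = (∑ j ∈ Ico (k 0) S, β j) / ∑ j ∈ Icc (k 0) S, β j := by
    rw [Pfun, one_sub_div hA, ← sum_Ico_add_eq_sum_Icc hS, add_sub_cancel_right]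
  have hL : Lval S k β = (∑ j ∈ Icc (k 0) S, (j : ℝ) * β j) / ∑ j ∈ Icc (k 0) S, β j := by
    simp only [Lval, Pfun, mul_div_assoc', ← sum_div]
  rw [Wq, hP, hL, mul_div_assoc', div_div_div_cancel_right₀ hA]

theorem Wq_le_Wq_of_policy_le {lam mu : ℝ} (hlam : 0 < lam) (hmu : 0 < mu) {N : ℕ} (hN : 1 ≤ N)
    {S : ℤ} {k k' : ℕ → ℤ} (hk : IsPolicy N S k) (hk' : IsPolicy N S k') {β β' : ℤ → ℝ}
    (hβ : IsBeta lam mu N k β) (hβ' : IsBeta lam mu N k' β') (hle : ∀ t ≤ N, k t ≤ k' t) :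
    Wq lam mu S k β ≤ Wq lam mu S k' β' := by
  have hr := div_pos hlam hmu
  have hS := hk.zero_lt hN
  have hS' := hk'.zero_lt hN
  have hA := hβ.sum_pos hk hr subset_rfl (nonempty_Icc.2 hS.le)
  have hA' := hβ'.sum_pos hk' hr subset_rfl (nonempty_Icc.2 hS'.le)
  have hB := hβ.sum_pos hk hr Ico_subset_Icc_self (nonempty_Ico.2 hS)
  have hB' := hβ'.sum_pos hk' hr Ico_subset_Icc_self (nonempty_Ico.2 hS')
  rw [Wq_eq_div lam mu k hS.le hA.ne', Wq_eq_div lam mu k' hS'.le hA'.ne', sub_le_sub_iff_right,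
    div_le_div_iff₀ (by positivity) (by positivity)]
  nlinarith [hβ.sum_mul_sum_le_of_policy_le hk hk' hβ' hr hle]

theorem dominance_rule_general
    (lam mu : ℝ) (hlam : 0 < lam) (hmu : 0 < mu)
    (N : ℕ) (hN : 1 ≤ N) (S : ℤ)
    (k k' : ℕ → ℤ) (hk : IsPolicy N S k) (hk' : IsPolicy N S k')
    (J : ℕ)
    (hpre : ∀ m : ℕ, m < J → k m = (m : ℤ) ∧ k' m = (m : ℤ))
    (β β' : ℤ → ℝ)
    (hβ : IsBeta lam mu N k β) (hβ' : IsBeta lam mu N k' β')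
    (hWq : Wq lam mu S k' β' < Wq lam mu S k β) :
    ∃ i : ℕ, J ≤ i ∧ i < N ∧ k' i < k i := by
  by_contra! hcon
  have hle : ∀ t ≤ N, k t ≤ k' t := by
    intro t ht
    rcases lt_or_ge t J with htJ | hJt
    · obtain ⟨h1, h2⟩ := hpre t htJ
      omega
    rcases ht.lt_or_eq with htN | rfl
    · exact hcon t hJt htN
    · rw [hk.2.2, hk'.2.2]
  exact (Wq_le_Wq_of_policy_le hlam hmu hN hk hk' hβ hβ' hle).not_gt hWq

/-- Dominance rule: if the two policies agree with the minimal values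
`0, 1, …, J-1` on the first `J` switching points, differ at `J`, and
`W_q(K') < W_q(K)`, then some switching point with index in
`{J, …, N-1}` is strictly smaller in `K'` than in `K`. -/
theorem dominance_rule
    (lam mu : ℝ) (hlam : 0 < lam) (hmu : 0 < mu)
    (N : ℕ) (hN : 1 ≤ N) (S : ℤ) (hS : (N : ℤ) ≤ S)
    (k k' : ℕ → ℤ) (hk : IsPolicy N S k) (hk' : IsPolicy N S k')
    (J : ℕ) (hJ : J < N)
    (hpre : ∀ m : ℕ, m < J → k m = (m : ℤ) ∧ k' m = (m : ℤ))
    (hne : k J ≠ k' J)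
    (β β' : ℤ → ℝ)
    (hβ : IsBeta lam mu N k β) (hβ' : IsBeta lam mu N k' β')
    (hWq : Wq lam mu S k' β' < Wq lam mu S k β) :
    ∃ i : ℕ, J ≤ i ∧ i < N ∧ k' i < k i :=
  dominance_rule_general lam mu hlam hmu N hN S k k' hk hk' J hpre β β' hβ hβ' hWq
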